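/- arXiv:2411.16151 — 9 statements merged into one kernel-verified Lean document; each statement's English description precedes it below -/
import Mathlib

section
/- Let y ∈ ℕ be positive and let r ≥ 2 be a squarefree positive integer. Then in ℤ[x], Φ_y(x^r) = ∏_{d | r/gcd(y,r)} Φ_{y·d·gcd(y,r)}(x). -/
open Polynomial

/-- Expanding by `m` where every prime of `m` divides `n` gives `Φ_{nm}`. -/
lemma expand_cyclotomic_of_dvd (n : ℕ) (hn : 0 < n) :
    ∀ m : ℕ, 0 < m → (∀ p : ℕ, p.Prime → p ∣ m → p ∣ n) →
      Polynomial.expand ℤ m (cyclotomic n ℤ) = cyclotomic (n * m) ℤ := by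
  intro m
  induction m using Nat.strong_induction_on with
  | _ m ih =>
    intro hm hdvd
    rcases eq_or_ne m 1 with rfl | h1
    · simp
    · have hp : m.minFac.Prime := Nat.minFac_prime h1
      obtain ⟨m', hm'⟩ := m.minFac_dvd
      set q := m.minFac with hq
      have hm'0 : 0 < m' := by
        rcases Nat.eq_zero_or_pos m' with rfl | h
        · rw [mul_zero] at hm'; omega
        · exact h
      have hlt : m' < m := by
        have h2 := hp.two_le
        nlinarith [hm'.symm]
      have hdvd' : ∀ p : ℕ, p.Prime → p ∣ m' → p ∣ n := fun p pp hpd =>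
        hdvd p pp (hpd.trans ⟨q, by rw [hm']; ring⟩)
      have hrec := ih m' hlt hm'0 hdvd'
      have hpn : q ∣ n * m' :=
        Dvd.dvd.mul_right (hdvd _ hp m.minFac_dvd) m'
      calc Polynomial.expand ℤ m (cyclotomic n ℤ)
          = Polynomial.expand ℤ q (Polynomial.expand ℤ m' (cyclotomic n ℤ)) := by
            rw [Polynomial.expand_expand, hm', mul_comm q m']
        _ = Polynomial.expand ℤ q (cyclotomic (n * m') ℤ) := by rw [hrec]
        _ = cyclotomic (n * m' * q) ℤ :=
            cyclotomic_expand_eq_cyclotomic hp hpn ℤ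
        _ = cyclotomic (n * m) ℤ := by rw [hm', mul_assoc, mul_comm m']

lemma prod_divisors_prime_mul {M : Type*} [CommMonoid M] {p s : ℕ} (hp : p.Prime)
    (hps : ¬ p ∣ s) (hs : s ≠ 0) (f : ℕ → M) :
    ∏ d ∈ (p * s).divisors, f d =
      (∏ d ∈ s.divisors, f (p * d)) * ∏ d ∈ s.divisors, f d := by
  have hinj : Function.Injective (fun d : ℕ => p * d) := fun a b h =>
    Nat.eq_of_mul_eq_mul_left hp.pos h
  have hunion : (p * s).divisors = s.divisors.map ⟨_, hinj⟩ ∪ s.divisors := by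
    ext x
    simp only [Nat.mem_divisors, Finset.mem_union, Finset.mem_map,
      Function.Embedding.coeFn_mk]
    constructor
    · rintro ⟨hx, hne⟩
      by_cases hpx : p ∣ x
      · obtain ⟨d, rfl⟩ := hpx
        left
        exact ⟨d, ⟨(mul_dvd_mul_iff_left (a := p)
          (by exact_mod_cast hp.pos.ne')).mp hx, hs⟩, rfl⟩
      · right
        have hcop : Nat.Coprime p x := (Nat.Prime.coprime_iff_not_dvd hp).mpr hpx
        exact ⟨(Nat.Coprime.dvd_of_dvd_mul_left hcop.symm hx), hs⟩
    · rintro (⟨d, ⟨hd, _⟩, rfl⟩ | ⟨hd, _⟩)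
      · exact ⟨mul_dvd_mul_left p hd, mul_ne_zero hp.pos.ne' hs⟩
      · exact ⟨hd.mul_left p, mul_ne_zero hp.pos.ne' hs⟩
  have hdisj : Disjoint (s.divisors.map ⟨_, hinj⟩) s.divisors := by
    rw [Finset.disjoint_left]
    rintro x hx hx'
    simp only [Finset.mem_map, Function.Embedding.coeFn_mk] at hx
    obtain ⟨d, _, rfl⟩ := hx
    exact hps ((dvd_mul_right p d).trans (Nat.mem_divisors.mp hx').1)
  rw [hunion, Finset.prod_union hdisj, Finset.prod_map]
  rfl

lemma expand_cyclotomic_coprime :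
    ∀ s : ℕ, ∀ n : ℕ, 0 < n → Squarefree s → Nat.Coprime n s →
      Polynomial.expand ℤ s (cyclotomic n ℤ) = ∏ d ∈ s.divisors, cyclotomic (n * d) ℤ := by
  intro s
  induction s using Nat.strong_induction_on with
  | _ s ih =>
    intro n hn hsq hcop
    have hs0 : s ≠ 0 := hsq.ne_zero
    rcases eq_or_ne s 1 with rfl | h1
    · simp
    · have hp : s.minFac.Prime := Nat.minFac_prime h1
      obtain ⟨s', hs'⟩ := s.minFac_dvd
      set p := s.minFac
      have hs'0 : s' ≠ 0 := by rintro rfl; rw [mul_zero] at hs'; exact hs0 hs'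
      have hps' : ¬ p ∣ s' := by
        intro h
        exact hp.one_lt.ne' (Nat.isUnit_iff.mp (hsq p (by
          rw [hs']; exact mul_dvd_mul_left p h)))
      have hpn : ¬ p ∣ n := by
        intro h
        have hcps : Nat.Coprime p s := Nat.Coprime.coprime_dvd_left h hcop
        exact (hp.coprime_iff_not_dvd.mp hcps) (hs' ▸ dvd_mul_right p s')
      have hsq' : Squarefree s' :=
        Squarefree.squarefree_of_dvd ⟨p, by rw [hs']; ring⟩ hsq
      have hcop' : Nat.Coprime n s' :=
        Nat.Coprime.coprime_dvd_right ⟨p, by rw [hs']; ring⟩ hcop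
      have hcopnp : Nat.Coprime (n * p) s' :=
        Nat.Coprime.mul hcop' (hp.coprime_iff_not_dvd.mpr hps')
      have hlt : s' < s := by
        have h2 := hp.two_le
        have hs'pos := Nat.pos_of_ne_zero hs'0
        nlinarith [hs'.symm]
      have step : Polynomial.expand ℤ p (cyclotomic n ℤ) =
          cyclotomic (n * p) ℤ * cyclotomic n ℤ :=
        cyclotomic_expand_eq_cyclotomic_mul hp hpn ℤ
      calc Polynomial.expand ℤ s (cyclotomic n ℤ)
          = Polynomial.expand ℤ s' (Polynomial.expand ℤ p (cyclotomic n ℤ)) := by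
            rw [Polynomial.expand_expand, hs', mul_comm p s']
        _ = Polynomial.expand ℤ s' (cyclotomic (n * p) ℤ) *
              Polynomial.expand ℤ s' (cyclotomic n ℤ) := by rw [step, map_mul]
        _ = (∏ d ∈ s'.divisors, cyclotomic (n * p * d) ℤ) *
              ∏ d ∈ s'.divisors, cyclotomic (n * d) ℤ := by
            rw [ih s' hlt (n * p) (Nat.mul_pos hn hp.pos) hsq' hcopnp,
              ih s' hlt n hn hsq' hcop']
        _ = ∏ d ∈ s.divisors, cyclotomic (n * d) ℤ := by
            rw [hs', prod_divisors_prime_mul hp hps' hs'0 (fun d => cyclotomic (n * d) ℤ)]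
            congr 1
            exact Finset.prod_congr rfl fun d _ => by rw [mul_assoc]

theorem cyclotomic_comp_X_pow_squarefree (y r : ℕ) (hy : 0 < y) (hr : 2 ≤ r)
    (hsq : Squarefree r) :
    (cyclotomic y ℤ).comp (X ^ r) =
      ∏ d ∈ (r / Nat.gcd y r).divisors, cyclotomic (y * d * Nat.gcd y r) ℤ := by
  set g := Nat.gcd y r with hg
  set s := r / g with hs
  have hg0 : 0 < g := Nat.gcd_pos_of_pos_left _ hy
  have hgr : g ∣ r := Nat.gcd_dvd_right y r
  have hgy : g ∣ y := Nat.gcd_dvd_left y r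
  have hrs : r = g * s := by rw [hs, Nat.mul_div_cancel' hgr]
  have hs0 : 0 < s := by
    rcases Nat.eq_zero_or_pos s with h | h
    · rw [h, mul_zero] at hrs; omega
    · exact h
  obtain ⟨hcgs, hsqg, hsqs⟩ := Nat.squarefree_mul_iff.mp (hrs ▸ hsq)
  have hcys : Nat.Coprime y s := by
    have hk : Nat.gcd y s ∣ g := Nat.dvd_gcd (Nat.gcd_dvd_left y s)
      ((Nat.gcd_dvd_right y s).trans ⟨g, by rw [hrs]; ring⟩)
    exact Nat.eq_one_of_dvd_one (hcgs ▸ Nat.dvd_gcd hk (Nat.gcd_dvd_right y s))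
  have hcop : Nat.Coprime (y * g) s := Nat.Coprime.mul hcys hcgs
  have h1 : Polynomial.expand ℤ g (cyclotomic y ℤ) = cyclotomic (y * g) ℤ :=
    expand_cyclotomic_of_dvd y hy g hg0 (fun p _ hpg => hpg.trans hgy)
  calc (cyclotomic y ℤ).comp (X ^ r)
      = Polynomial.expand ℤ r (cyclotomic y ℤ) := by rw [← Polynomial.expand_eq_comp_X_pow]
    _ = Polynomial.expand ℤ s (Polynomial.expand ℤ g (cyclotomic y ℤ)) := by
        rw [Polynomial.expand_expand, hrs, mul_comm g s]
    _ = Polynomial.expand ℤ s (cyclotomic (y * g) ℤ) := by rw [h1]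
    _ = ∏ d ∈ s.divisors, cyclotomic (y * g * d) ℤ :=
        expand_cyclotomic_coprime s (y * g) (by positivity) hsqs hcop
    _ = ∏ d ∈ s.divisors, cyclotomic (y * d * g) ℤ :=
        Finset.prod_congr rfl fun d _ => by rw [mul_right_comm]
end

section
/- Let K be a field, f(x) ∈ K[x] an irreducible polynomial, and r ≥ 3 an odd positive integer. If f(x^r) is irreducible over K, then f(x^{r^k}) is irreducible over K for every k ≥ 2. -/
/-!
By Capelli's lemma, `f(x^n)` is irreducible iff `x^n - α` is irreducible over `K(α)` for a root
`α` of `f`, and for odd `n` the latter holds as soon as `α` is not a `p`-th power in `K(α)` for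
any prime `p ∣ n`. If `α = β^p` with `β ∈ K(α)`, then `β` is a root of `f(x^p)`, of degree
`p · deg f > [K(α) : K]`, so `f(x^p)` is reducible. Since `f(x^r)` irreducible forces `f(x^p)`
irreducible for every `p ∣ r`, and the primes dividing `r^k` are those dividing `r`, the
criterion applies to `n = r^k`.
-/

open Polynomial IntermediateField

theorem Irreducible.of_comp_X_pow_of_dvd {R : Type*} [CommRing R] [IsDomain R] {f : R[X]}
    {m n : ℕ} (h : Irreducible (f.comp (X ^ n))) (hmn : m ∣ n) (hn : n ≠ 0) :
    Irreducible (f.comp (X ^ m)) := by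
  obtain ⟨d, rfl⟩ := hmn
  rw [← expand_eq_comp_X_pow, mul_comm, ← expand_expand] at h
  exact of_irreducible_expand (right_ne_zero_of_mul hn) h

section Field

variable {K : Type*} [Field K]

theorem IntermediateField.pow_ne_adjoinSimple_gen_of_irreducible_minpoly_comp
    {E : Type*} [Field E] [Algebra K E] {α : E} {n : ℕ} (hn : 1 < n)
    (h : Irreducible ((minpoly K α).comp (X ^ n))) (b : K⟮α⟯) :
    b ^ n ≠ AdjoinSimple.gen K α := by
  intro hb
  have hα : IsIntegral K α := by
    by_contra hα
    rw [minpoly.eq_zero hα, zero_comp] at h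
    exact not_irreducible_zero h
  have hroot : aeval b ((minpoly K α).comp (X ^ n)) = 0 := by
    rw [aeval_comp, map_pow, aeval_X, hb, ← minpoly_gen, minpoly.aeval]
  have hmonic : ((minpoly K α).comp (X ^ n)).Monic :=
    (minpoly.monic hα).comp (monic_X_pow n) (by rw [natDegree_X_pow]; omega)
  have hminpoly_b := minpoly.eq_of_irreducible_of_monic h hroot hmonic
  have := adjoin.finiteDimensional hα
  have hle := minpoly.natDegree_le (A := K) b
  rw [← hminpoly_b, natDegree_comp, natDegree_X_pow, adjoin.finrank hα] at hle
  exact hle.not_gt ((Nat.lt_mul_iff_one_lt_right (minpoly.natDegree_pos hα)).2 hn)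

theorem Irreducible.comp_X_pow_of_odd {f : K[X]} (hf : Irreducible f) {n : ℕ} (hn : Odd n)
    (hp : ∀ p : ℕ, p.Prime → p ∣ n → Irreducible (f.comp (X ^ p))) :
    Irreducible (f.comp (X ^ n)) := by
  wlog hmonic : f.Monic generalizing f
  · set c := f.leadingCoeff⁻¹
    have hc : IsUnit (C c) := isUnit_C.2 (inv_ne_zero (leadingCoeff_ne_zero.2 hf.ne_zero)).isUnit
    have hcomp (m : ℕ) : (C c * f).comp (X ^ m) = C c * f.comp (X ^ m) := by
      rw [mul_comp, C_comp]
    have hmonic : (C c * f).Monic := by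
      simpa [mul_comm] using monic_mul_leadingCoeff_inv hf.ne_zero
    have := this ((irreducible_isUnit_mul hc).2 hf)
      (fun p hp_prime hpn ↦ by rw [hcomp, irreducible_isUnit_mul hc]; exact hp p hp_prime hpn)
      hmonic
    rwa [hcomp, irreducible_isUnit_mul hc] at this
  refine irreducible_comp hmonic (monic_X_pow n) hf fun E _ _ α hα ↦ ?_
  rw [Polynomial.map_pow, map_X]
  refine X_pow_sub_C_irreducible_of_odd hn fun p hp_prime hpn b ↦ ?_
  rw [← hα] at hp
  exact pow_ne_adjoinSimple_gen_of_irreducible_minpoly_comp hp_prime.one_lt (hp p hp_prime hpn) b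

end Field

theorem irreducible_comp_X_pow_tower_general (K : Type*) [Field K] (f : Polynomial K)
    (r : ℕ) (hodd : Odd r)
    (hirr : Irreducible (f.comp (X ^ r))) :
    ∀ k : ℕ, 2 ≤ k → Irreducible (f.comp (X ^ r ^ k)) := by
  intro k _
  have hr : r ≠ 0 := hodd.pos.ne'
  have hf : Irreducible f := by simpa using hirr.of_comp_X_pow_of_dvd (one_dvd r) hr
  exact hf.comp_X_pow_of_odd hodd.pow fun p hp hpk ↦
    hirr.of_comp_X_pow_of_dvd (hp.dvd_of_dvd_pow hpk) hr

theorem irreducible_comp_X_pow_tower (K : Type*) [Field K] (f : Polynomial K)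
    (hf : Irreducible f) (r : ℕ) (hr : 3 ≤ r) (hodd : Odd r)
    (hirr : Irreducible (f.comp (X ^ r))) :
    ∀ k : ℕ, 2 ≤ k → Irreducible (f.comp (X ^ r ^ k)) :=
  irreducible_comp_X_pow_tower_general K f r hodd hirr
end

section
/- Let q be a positive rational number and let M_q := ⟨q^n : n ∈ ℕ₀⟩ be the additive submonoid of ℚ≥0 generated by the nonnegative powers of q. If the monoid algebra ℤ[M_q] is atomic, then the monoid algebra ℚ[M_q] is atomic. -/
/-- The exponentially cyclic Puiseux monoid `M_q = ⟨q^n : n ∈ ℕ₀⟩`,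
as an additive submonoid of `ℚ`. -/
def Mq (q : ℚ) : AddSubmonoid ℚ :=
  AddSubmonoid.closure (Set.range fun n : ℕ => q ^ n)

/-- A commutative ring is atomic if every nonzero nonunit is a finite
product of irreducible elements. -/
def IsAtomicRing (R : Type*) [CommRing R] : Prop :=
  ∀ r : R, r ≠ 0 → ¬ IsUnit r →
    ∃ s : Multiset R, (∀ a ∈ s, Irreducible a) ∧ s.prod = r

/-!
Clearing denominators, `ℚ[M]` behaves like the localisation of `ℤ[M]` at the positive integers,
and each rational prime `p` stays prime in `ℤ[M]` since `ℤ[M] / (p) ≅ 𝔽_p[M]` is a domain.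
So a positive integer `k` is primal in `ℤ[M]`: if an irreducible `a` of `ℤ[M]` factors as
`X * Y` in `ℚ[M]` and `k * a = x * y` with `x, y` multiples of `X, Y`, then `k = c * d` with
`c ∣ x` and `d ∣ y`; cancelling `k` factors `a` in `ℤ[M]`, and since `c, d` become units in
`ℚ[M]`, one of `X`, `Y` is a unit. A factorisation of a numerator of `F` in `ℤ[M]` is therefore
one of `F` in `ℚ[M]` up to units.
-/

/-- `S` plays the role of the denominators of a localisation `φ : A → B`. -/
theorem Irreducible.isUnit_or_irreducible_map_of_isPrimal {A B F : Type*} [CommMonoid A]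
    [CommMonoid B] [FunLike F A B] [MonoidHomClass F A B] (φ : F) (hφ : Function.Injective φ)
    (S : Submonoid A) (hS : ∀ s ∈ S, IsPrimal s) (hSu : ∀ s ∈ S, IsUnit (φ s))
    (hden : ∀ b, ∃ s ∈ S, ∃ a, φ a = φ s * b) {a : A} (ha : Irreducible a) :
    IsUnit (φ a) ∨ Irreducible (φ a) := by
  refine or_iff_not_imp_left.2 fun hu => ⟨hu, fun X Y hXY => ?_⟩
  obtain ⟨s, hs, x, hx⟩ := hden X
  obtain ⟨t, ht, y, hy⟩ := hden Y
  have hst : IsUnit (φ (s * t)) := hSu _ (S.mul_mem hs ht)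
  have hxy : x * y = s * t * a := hφ (by simp only [map_mul, hx, hy, hXY, mul_mul_mul_comm])
  obtain ⟨c, d, ⟨x₁, rfl⟩, ⟨y₁, rfl⟩, hcd⟩ := hS _ (S.mul_mem hs ht) ⟨a, hxy⟩
  have hc : IsUnit (φ c) := isUnit_of_dvd_unit (map_dvd φ ⟨d, hcd⟩) hst
  have hd : IsUnit (φ d) := isUnit_of_dvd_unit (map_dvd φ ⟨c, hcd.trans (mul_comm c d)⟩) hst
  have ha' : a = x₁ * y₁ := by
    refine hφ (hst.mul_left_cancel ?_)
    rw [← map_mul, ← map_mul, ← hxy, hcd, mul_mul_mul_comm]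
  rcases ha.isUnit_or_isUnit ha' with h₁ | h₁
  · refine .inl (isUnit_of_mul_isUnit_right (x := φ s) ?_)
    rw [← hx, map_mul]
    exact hc.mul (h₁.map φ)
  · refine .inr (isUnit_of_mul_isUnit_right (x := φ t) ?_)
    rw [← hy, map_mul]
    exact hd.mul (h₁.map φ)

theorem Multiset.exists_prod_eq_of_isUnit_or_irreducible {α : Type*} [CommMonoid α]
    (t : Multiset α) (ht : ∀ x ∈ t, IsUnit x ∨ Irreducible x) {u : α} (hu : IsUnit u)
    (hnu : ¬ IsUnit (u * t.prod)) :
    ∃ s : Multiset α, (∀ a ∈ s, Irreducible a) ∧ s.prod = u * t.prod := by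
  induction t using Multiset.induction_on generalizing u with
  | empty => exact absurd (by simpa using hu) hnu
  | cons a t ih =>
    have ht' := fun x hx => ht x (Multiset.mem_cons_of_mem hx)
    rw [Multiset.prod_cons, mul_left_comm] at hnu ⊢
    rcases ht a (Multiset.mem_cons_self a t) with ha | ha
    · simpa only [mul_assoc] using ih ht' (ha.mul hu) (by rwa [mul_assoc])
    · by_cases htu : IsUnit (u * t.prod)
      · exact ⟨{a * (u * t.prod)}, by simpa using (irreducible_mul_isUnit htu).2 ha, by simp⟩
      · obtain ⟨s, hs, hsp⟩ := ih ht' hu htu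
        exact ⟨a ::ₘ s, by simpa using ⟨ha, hs⟩, by rw [Multiset.prod_cons, hsp]⟩

theorem IsAtomicRing.of_ringHom {A B : Type*} [CommRing A] [CommRing B] (φ : A →+* B)
    (hA : IsAtomicRing A) (hirr : ∀ a, Irreducible a → IsUnit (φ a) ∨ Irreducible (φ a))
    (hden : ∀ b, ∃ a, Associated (φ a) b) : IsAtomicRing B := by
  intro b hb0 hbu
  obtain ⟨a, u, rfl⟩ := hden b
  obtain ⟨s, hs, rfl⟩ := hA a (fun h => hb0 (by simp [h]))
    (fun h => hbu ((h.map φ).mul u.isUnit))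
  rw [mul_comm, map_multiset_prod] at hbu ⊢
  exact (s.map φ).exists_prod_eq_of_isUnit_or_irreducible
    (Multiset.forall_mem_map_iff.2 fun a ha => hirr a (hs a ha)) u.isUnit hbu

namespace AddMonoidAlgebra

variable {M : Type*} [AddCommMonoid M]

theorem natCast_dvd_iff {n : ℕ} {f : AddMonoidAlgebra ℤ M} :
    (n : AddMonoidAlgebra ℤ M) ∣ f ↔ ∀ m, (n : ℤ) ∣ f.coeff m := by
  constructor
  · rintro ⟨g, rfl⟩ m
    exact ⟨g.coeff m, by rw [natCast_def, coeff_single_zero_mul]⟩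
  · intro h
    refine ⟨ofCoeff (f.coeff.mapRange (· / (n : ℤ)) (Int.zero_ediv _)), ?_⟩
    ext m
    rw [natCast_def, coeff_single_zero_mul, coeff_ofCoeff, Finsupp.mapRange_apply,
      Int.mul_ediv_cancel' (h m)]

theorem ker_mapRingHom_intCast_zmod (n : ℕ) :
    RingHom.ker (mapRingHom M (Int.castRingHom (ZMod n))) =
      Ideal.span {(n : AddMonoidAlgebra ℤ M)} := by
  ext f
  simp only [RingHom.mem_ker, Ideal.mem_span_singleton, natCast_dvd_iff, ← coeff_inj,
    Finsupp.ext_iff, coeff_mapRingHom, coeff_zero, Finsupp.coe_zero, Pi.zero_apply, eq_intCast,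
    ZMod.intCast_zmod_eq_zero_iff_dvd]

theorem exists_map_intCast_eq_natCast_mul (F : AddMonoidAlgebra ℚ M) :
    ∃ n : ℕ, n ≠ 0 ∧
      ∃ f : AddMonoidAlgebra ℤ M, mapRingHom M (Int.castRingHom ℚ) f = n * F := by
  induction F using induction_linear with
  | zero => exact ⟨1, one_ne_zero, 0, by simp⟩
  | add F G hF hG =>
    obtain ⟨n, hn, f, hf⟩ := hF
    obtain ⟨m, hm, g, hg⟩ := hG
    refine ⟨n * m, mul_ne_zero hn hm, m * f + n * g, ?_⟩
    simp only [map_add, map_mul, map_natCast, hf, hg, Nat.cast_mul]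
    ring
  | single m r =>
    refine ⟨r.den, r.den_nz, single m r.num, ?_⟩
    rw [mapRingHom_single, natCast_def, single_mul_single, zero_add, eq_intCast,
      Rat.den_mul_eq_num]

variable [UniqueSums M]

theorem prime_natCast {p : ℕ} (hp : p.Prime) : Prime (p : AddMonoidAlgebra ℤ M) := by
  have := Fact.mk hp
  have hp0 : (p : AddMonoidAlgebra ℤ M) ≠ 0 := by
    simpa [natCast_def] using hp.ne_zero
  rw [← Ideal.span_singleton_prime hp0, ← ker_mapRingHom_intCast_zmod]
  exact RingHom.ker_isPrime _

theorem isPrimal_natCast (n : ℕ) : IsPrimal (n : AddMonoidAlgebra ℤ M) := by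
  induction n using Nat.recOnMul with
  | zero => simpa using isPrimal_zero
  | one => simpa using isUnit_one.isPrimal
  | prime p hp => exact (prime_natCast hp).isPrimal
  | mul a b ha hb => simpa using ha.mul hb

theorem isAtomicRing_rat_of_isAtomicRing_int (h : IsAtomicRing (AddMonoidAlgebra ℤ M)) :
    IsAtomicRing (AddMonoidAlgebra ℚ M) := by
  set φ := mapRingHom M (Int.castRingHom ℚ)
  have hunit (n : ℕ) (hn : n ≠ 0) : IsUnit (n : AddMonoidAlgebra ℚ M) := by
    simpa using (isUnit_iff_ne_zero.2 (Nat.cast_ne_zero.2 hn : (n : ℚ) ≠ 0)).map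
      (algebraMap ℚ (AddMonoidAlgebra ℚ M))
  refine h.of_ringHom φ (fun a ha => ha.isUnit_or_irreducible_map_of_isPrimal φ
    (map_injective _ Int.cast_injective) ((nonZeroDivisors ℕ).map (Nat.castRingHom _)) ?_ ?_ ?_)
    fun F => ?_
  · rintro _ ⟨n, -, rfl⟩
    exact isPrimal_natCast n
  · rintro _ ⟨n, hn, rfl⟩
    simpa [φ] using hunit n (nonZeroDivisors.ne_zero hn)
  · intro F
    obtain ⟨n, hn, f, hf⟩ := exists_map_intCast_eq_natCast_mul F
    exact ⟨n, ⟨n, mem_nonZeroDivisors_of_ne_zero hn, rfl⟩, f, by simpa [φ] using hf⟩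
  · obtain ⟨n, hn, f, hf⟩ := exists_map_intCast_eq_natCast_mul F
    exact ⟨f, hf ▸ associated_unit_mul_left F _ (hunit n hn)⟩

end AddMonoidAlgebra

theorem atomic_int_monoidAlgebra_imp_atomic_rat_general (q : ℚ)
    (h : IsAtomicRing (AddMonoidAlgebra ℤ (Mq q))) :
    IsAtomicRing (AddMonoidAlgebra ℚ (Mq q)) :=
  AddMonoidAlgebra.isAtomicRing_rat_of_isAtomicRing_int h

theorem atomic_int_monoidAlgebra_imp_atomic_rat (q : ℚ) (hq : 0 < q)
    (h : IsAtomicRing (AddMonoidAlgebra ℤ (Mq q))) :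
    IsAtomicRing (AddMonoidAlgebra ℚ (Mq q)) :=
  atomic_int_monoidAlgebra_imp_atomic_rat_general q h
end

section
/- Let f(x) be an irreducible polynomial in ℤ[x] of degree d ≥ 1 and let p be an odd prime. If f(x^p) is reducible in ℤ[x], then every irreducible factor of f(x^p) in ℤ[x] has degree at least d; in particular, f(x^p) has at most p irreducible factors (with multiplicity) in ℤ[x]. -/
/-!
If `g` divides `f(q(x))` over a field, then in `K[x]/(g)` the element `q(x)` is a root of `f`; when
`f` is irreducible its degree is that of the minimal polynomial of this element, hence at most
`dim K[x]/(g) = deg g`. Over `ℤ` an irreducible `f` of positive degree is primitive, so is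
`f(x^p)`, and Gauss's lemma lets us pass to `ℚ`. Comparing degrees in `f(x^p) = ∏ gᵢ` gives
`(number of factors) · d ≤ p d`.
-/

open Polynomial

namespace Polynomial

theorem natDegree_le_of_dvd_comp {K : Type*} [Field K] {f g : K[X]} (q : K[X])
    (hf : Irreducible f) (hg : 0 < g.natDegree) (hdvd : g ∣ f.comp q) :
    f.natDegree ≤ g.natDegree := by
  have hg0 : g ≠ 0 := ne_zero_of_natDegree_gt hg
  have : Nontrivial (AdjoinRoot g) :=
    AdjoinRoot.nontrivial g (by rw [degree_eq_natDegree hg0]; exact_mod_cast hg.ne')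
  let pb := AdjoinRoot.powerBasis hg0
  have : Module.Finite K (AdjoinRoot g) := pb.finite
  have : Module.Free K (AdjoinRoot g) := .of_basis pb.basis
  set x := aeval (AdjoinRoot.root g) q
  have hfx : aeval x f = 0 := by
    rw [← aeval_comp, AdjoinRoot.aeval_eq, AdjoinRoot.mk_eq_zero]
    exact hdvd
  calc f.natDegree = (minpoly K x).natDegree := by
        rw [← minpoly.eq_of_irreducible hf hfx,
          natDegree_mul_C (inv_ne_zero (leadingCoeff_ne_zero.mpr hf.ne_zero))]
    _ ≤ Module.finrank K (AdjoinRoot g) := minpoly.natDegree_le x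
    _ = g.natDegree := by rw [pb.finrank, AdjoinRoot.powerBasis_dim]

theorem IsPrimitive.expand {R : Type*} [CommRing R] {f : R[X]} (hf : f.IsPrimitive)
    {p : ℕ} (hp : 0 < p) : (expand R p f).IsPrimitive := fun c hc =>
  hf c <| (C_dvd_iff_dvd_coeff _ _).mpr fun n => by
    simpa only [coeff_expand_mul hp] using (C_dvd_iff_dvd_coeff _ _).mp hc (n * p)

theorem IsPrimitive.natDegree_pos_of_irreducible_dvd {R : Type*} [CommRing R] {f g : R[X]}
    (hf : f.IsPrimitive) (hg : Irreducible g) (hdvd : g ∣ f) : 0 < g.natDegree := by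
  refine Nat.pos_of_ne_zero fun hg0 => hg.not_isUnit ?_
  rw [eq_C_of_natDegree_eq_zero hg0] at hdvd ⊢
  exact isUnit_C.mpr (hf _ hdvd)

theorem natDegree_le_of_irreducible_dvd_expand {R : Type*} [CommRing R] [IsDomain R]
    [IsGCDMonoid R] {f g : R[X]} {p : ℕ} (hp : 0 < p) (hf : Irreducible f)
    (hf0 : f.natDegree ≠ 0) (hg : Irreducible g) (hdvd : g ∣ expand R p f) :
    f.natDegree ≤ g.natDegree := by
  let K := FractionRing R
  have hinj := IsFractionRing.injective R K
  have hgpos := ((hf.isPrimitive hf0).expand hp).natDegree_pos_of_irreducible_dvd hg hdvd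
  have hfK : Irreducible (f.map (algebraMap R K)) :=
    ((hf.isPrimitive hf0).irreducible_iff_irreducible_map_fraction_map).mp hf
  have hdvdK : g.map (algebraMap R K) ∣ (f.map (algebraMap R K)).comp (X ^ p) := by
    rw [← expand_eq_comp_X_pow, ← map_expand]
    exact Polynomial.map_dvd _ hdvd
  have := natDegree_le_of_dvd_comp _ hfK (by rwa [natDegree_map_eq_of_injective hinj]) hdvdK
  rwa [natDegree_map_eq_of_injective hinj, natDegree_map_eq_of_injective hinj] at this

theorem card_mul_le_natDegree_prod {R : Type*} [CommSemiring R] [NoZeroDivisors R]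
    {s : Multiset R[X]} {d : ℕ} (h0 : (0 : R[X]) ∉ s) (hd : ∀ a ∈ s, d ≤ a.natDegree) :
    Multiset.card s * d ≤ s.prod.natDegree := by
  rw [natDegree_multiset_prod s h0, ← smul_eq_mul, ← Multiset.card_map natDegree]
  exact Multiset.card_nsmul_le_sum (by simpa using hd)

end Polynomial

theorem comp_X_pow_prime_factors_general (f : Polynomial ℤ) (hf : Irreducible f)
    (d : ℕ) (hd : f.natDegree = d) (hd1 : 1 ≤ d)
    (p : ℕ) (hp : p.Prime) :
    (∀ g : Polynomial ℤ, Irreducible g → g ∣ f.comp (X ^ p) → d ≤ g.natDegree) ∧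
    (∀ s : Multiset (Polynomial ℤ), (∀ a ∈ s, Irreducible a) →
      Associated s.prod (f.comp (X ^ p)) → Multiset.card s ≤ p) := by
  have factor_deg : ∀ g : ℤ[X], Irreducible g → g ∣ f.comp (X ^ p) → d ≤ g.natDegree :=
    fun g hg hdvd => hd ▸ natDegree_le_of_irreducible_dvd_expand hp.pos hf (by omega) hg
      (by rwa [expand_eq_comp_X_pow])
  refine ⟨factor_deg, fun s hs hassoc => ?_⟩
  have h0 : (0 : ℤ[X]) ∉ s := fun h => (hs 0 h).ne_zero rfl
  have hprod : s.prod.natDegree = p * d := by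
    rw [natDegree_eq_of_degree_eq (degree_eq_degree_of_associated hassoc), natDegree_comp,
      natDegree_X_pow, hd, mul_comm]
  have := card_mul_le_natDegree_prod h0 fun a ha =>
    factor_deg a (hs a ha) ((Multiset.dvd_prod ha).trans hassoc.dvd)
  rw [hprod] at this
  exact Nat.le_of_mul_le_mul_right this hd1

theorem comp_X_pow_prime_factors (f : Polynomial ℤ) (hf : Irreducible f)
    (d : ℕ) (hd : f.natDegree = d) (hd1 : 1 ≤ d)
    (p : ℕ) (hp : p.Prime) (hodd : Odd p)
    (hred : ¬ Irreducible (f.comp (X ^ p))) :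
    (∀ g : Polynomial ℤ, Irreducible g → g ∣ f.comp (X ^ p) → d ≤ g.natDegree) ∧
    (∀ s : Multiset (Polynomial ℤ), (∀ a ∈ s, Irreducible a) →
      Associated s.prod (f.comp (X ^ p)) → Multiset.card s ≤ p) :=
  comp_X_pow_prime_factors_general f hf d hd hd1 p hp
end

section
/- Let f(x) ∈ ℤ[x] be irreducible and let r ≥ 3 be an odd squarefree positive integer. If f(x^r) is reducible in ℤ[x], then f(x^r) has at most r irreducible factors (counted with multiplicity) in ℤ[x]. -/
open Polynomial IntermediateField

private lemma isPrimitive_of_irred {p : Polynomial ℤ} (hp : Irreducible p)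
    (hd : p.natDegree ≠ 0) : p.IsPrimitive := by
  intro c hc
  obtain ⟨g, hg⟩ := hc
  rcases hp.isUnit_or_isUnit hg with h | h
  · exact isUnit_C.mp h
  · exfalso
    apply hd
    have h1 : p.natDegree ≤ (C c).natDegree + g.natDegree := hg ▸ natDegree_mul_le
    simpa [natDegree_C, natDegree_eq_zero_of_isUnit h] using h1

private lemma deg_le_of_dvd_comp {f a : Polynomial ℤ} (hf : Irreducible f)
    (hd : f.natDegree ≠ 0) (ha : Irreducible a) (hda : a.natDegree ≠ 0)
    {r : ℕ} (hdvd : a ∣ f.comp (X ^ r)) :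
    f.natDegree ≤ a.natDegree := by
  set φ := Int.castRingHom ℚ
  have hfQ : Irreducible (f.map φ) :=
    (IsPrimitive.Int.irreducible_iff_irreducible_map_cast (isPrimitive_of_irred hf hd)).mp hf
  have haQ : Irreducible (a.map φ) :=
    (IsPrimitive.Int.irreducible_iff_irreducible_map_cast (isPrimitive_of_irred ha hda)).mp ha
  have hinj : Function.Injective φ := Int.cast_injective
  have hdegf : (f.map φ).natDegree = f.natDegree := natDegree_map_eq_of_injective hinj f
  have hdega : (a.map φ).natDegree = a.natDegree := natDegree_map_eq_of_injective hinj a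
  -- root of a over ℂ
  have hdegpos : 0 < ((a.map φ).map (algebraMap ℚ ℂ)).degree := by
    rw [degree_map]
    exact natDegree_pos_iff_degree_pos.mp (by omega)
  obtain ⟨α, hα⟩ := Complex.exists_root hdegpos
  have hroot : aeval α (a.map φ) = 0 := by
    rwa [aeval_def, ← eval_map]
  have hint : IsIntegral ℚ α :=
    (isAlgebraic_iff_isIntegral.mp ⟨a.map φ, haQ.ne_zero, hroot⟩)
  -- β = α^r is a root of f.map φ
  have hrootβ : aeval (α ^ r) (f.map φ) = 0 := by
    have h1 : aeval α ((f.comp (X ^ r)).map φ) = 0 := by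
      obtain ⟨g, hg⟩ := hdvd
      rw [hg, Polynomial.map_mul, map_mul, hroot, zero_mul]
    rw [Polynomial.map_comp] at h1
    simpa [aeval_comp] using h1
  -- minpoly computations
  have hminα : (minpoly ℚ α).natDegree = a.natDegree := by
    rw [← minpoly.eq_of_irreducible haQ hroot,
      natDegree_mul_C (inv_ne_zero (leadingCoeff_ne_zero.mpr haQ.ne_zero)), hdega]
  have hminβ : (minpoly ℚ (α ^ r)).natDegree = f.natDegree := by
    rw [← minpoly.eq_of_irreducible hfQ hrootβ,
      natDegree_mul_C (inv_ne_zero (leadingCoeff_ne_zero.mpr hfQ.ne_zero)), hdegf]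
  -- field tower
  haveI : FiniteDimensional ℚ ℚ⟮α⟯ := IntermediateField.adjoin.finiteDimensional hint
  set γ : ℚ⟮α⟯ := (IntermediateField.AdjoinSimple.gen ℚ α) ^ r with hγdef
  have hγ : algebraMap ℚ⟮α⟯ ℂ γ = α ^ r := by
    rw [hγdef, map_pow, IntermediateField.AdjoinSimple.algebraMap_gen]
  have hmin_eq : minpoly ℚ (α ^ r) = minpoly ℚ γ := by
    rw [← hγ, minpoly.algebraMap_eq (algebraMap ℚ⟮α⟯ ℂ).injective]
  have hle : (minpoly ℚ γ).natDegree ≤ Module.finrank ℚ ℚ⟮α⟯ := minpoly.natDegree_le γ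
  rw [IntermediateField.adjoin.finrank hint, hminα] at hle
  rw [← hminβ, hmin_eq]
  exact hle


theorem comp_X_pow_squarefree_factor_bound (f : Polynomial ℤ) (hf : Irreducible f)
    (r : ℕ) (hr : 3 ≤ r) (hodd : Odd r) (hsq : Squarefree r)
    (hred : ¬ Irreducible (f.comp (X ^ r))) :
    ∀ s : Multiset (Polynomial ℤ), (∀ a ∈ s, Irreducible a) →
      Associated s.prod (f.comp (X ^ r)) → Multiset.card s ≤ r := by
  intro s hs hassoc
  have hrpos : 0 < r := by omega
  -- f is nonconstant
  have hd : f.natDegree ≠ 0 := by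
    intro h
    apply hred
    rw [eq_C_of_natDegree_eq_zero h, C_comp]
    rw [eq_C_of_natDegree_eq_zero h] at hf
    exact hf
  -- f.comp (X^r) is primitive
  have hprim : (f.comp (X ^ r)).IsPrimitive := by
    intro c hc
    rw [← expand_eq_comp_X_pow, C_dvd_iff_dvd_coeff] at hc
    apply isPrimitive_of_irred hf hd
    rw [C_dvd_iff_dvd_coeff]
    intro i
    have := hc (i * r)
    rwa [coeff_expand_mul hrpos] at this
  -- each factor is nonconstant with degree ≥ deg f
  have key : ∀ a ∈ s, f.natDegree ≤ a.natDegree := by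
    intro a has
    have hdvd : a ∣ f.comp (X ^ r) :=
      (Multiset.dvd_prod has).trans hassoc.dvd
    have hda : a.natDegree ≠ 0 := by
      intro h
      apply (hs a has).not_isUnit
      rw [eq_C_of_natDegree_eq_zero h]
      apply isUnit_C.mpr
      apply hprim
      rw [← eq_C_of_natDegree_eq_zero h]
      exact hdvd
    exact deg_le_of_dvd_comp hf hd (hs a has) hda hdvd
  -- degree counting
  have h0 : (0 : Polynomial ℤ) ∉ s := fun h => (hs 0 h).ne_zero rfl
  have hsum : (s.map natDegree).sum = f.natDegree * r := by
    rw [← natDegree_multiset_prod s h0]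
    obtain ⟨u, hu⟩ := hassoc
    have hu0 : (u : Polynomial ℤ) ≠ 0 := u.isUnit.ne_zero
    have hp0 : s.prod ≠ 0 := Multiset.prod_ne_zero h0
    have := congrArg natDegree hu
    rw [natDegree_mul hp0 hu0, natDegree_eq_zero_of_isUnit u.isUnit, add_zero,
      natDegree_comp, natDegree_X_pow] at this
    omega
  have hcard : Multiset.card s * f.natDegree ≤ (s.map natDegree).sum := by
    have := Multiset.sum_map_le_sum_map (fun _ => f.natDegree) natDegree key
    simpa [Multiset.map_const', Multiset.sum_replicate, smul_eq_mul] using this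
  rw [hsum] at hcard
  have hdpos : 0 < f.natDegree := Nat.pos_of_ne_zero hd
  rw [mul_comm] at hcard
  exact Nat.le_of_mul_le_mul_left hcard hdpos
end

section
/- Let f(x) ∈ ℤ[x] be irreducible nonconstant, let b(x) ∈ ℤ[x] be irreducible, not associate to f(x), and suppose b(x) divides f(x^{r}) in ℤ[x] for some integer r ≥ 2. Then for any factorization r = σ₁ ⋯ σ_k with each σ_i ≥ 2, there exists a chain of irreducible polynomials f = f₀, f₁, …, f_k in ℤ[x] with f_k = b such that f_i divides f_{i−1}(x^{σ_i}) for each 1 ≤ i ≤ k. -/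
open Polynomial

lemma multiset_prod_comp (s : Multiset (Polynomial ℤ)) (q : Polynomial ℤ) :
    s.prod.comp q = (s.map (·.comp q)).prod := by
  induction s using Multiset.induction with
  | empty => simp
  | cons a s ih => simp [mul_comp, ih]

lemma key_step (h b q : Polynomial ℤ) (hh : h ≠ 0) (hb : Prime b)
    (hd : b ∣ h.comp q) : ∃ g, Irreducible g ∧ g ∣ h ∧ b ∣ g.comp q := by
  classical
  obtain ⟨u, hu⟩ := UniqueFactorizationMonoid.factors_prod hh
  have hcomp : h.comp q = ((UniqueFactorizationMonoid.factors h).map (·.comp q)).prod * ((u : Polynomial ℤ).comp q) := by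
    conv_lhs => rw [← hu]
    rw [mul_comp, multiset_prod_comp]
  have hunit : IsUnit ((u : Polynomial ℤ).comp q) := by
    obtain ⟨r, hr, hcr⟩ := Polynomial.isUnit_iff.mp u.isUnit
    rw [← hcr, C_comp]
    exact Polynomial.isUnit_C.mpr hr
  have : b ∣ ((UniqueFactorizationMonoid.factors h).map (·.comp q)).prod := by
    rw [hcomp] at hd
    exact (hunit.dvd_mul_right).mp hd
  obtain ⟨g, hgmem, hgdvd⟩ := hb.exists_mem_multiset_map_dvd this
  exact ⟨g, UniqueFactorizationMonoid.irreducible_of_factor g hgmem,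
    UniqueFactorizationMonoid.dvd_of_mem_factors hgmem, hgdvd⟩

lemma aux_chain : ∀ (k : ℕ) (f b : Polynomial ℤ) (σ : Fin k → ℕ),
    Irreducible f → Irreducible b → (∀ i, 2 ≤ σ i) → b ∣ f.comp (X ^ ∏ i, σ i) →
    ∃ F : Fin (k + 1) → Polynomial ℤ,
      F 0 = f ∧ Associated (F (Fin.last k)) b ∧ (∀ i, Irreducible (F i)) ∧
      ∀ i : Fin k, F i.succ ∣ (F i.castSucc).comp (X ^ σ i) := by
  intro k
  induction k with
  | zero =>
    intro f b σ hf hb hσ hdvd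
    simp only [Finset.univ_eq_empty, Finset.prod_empty, pow_one, comp_X] at hdvd
    exact ⟨fun _ => f, rfl, (hb.associated_of_dvd hf hdvd).symm, fun _ => hf,
      fun i => i.elim0⟩
  | succ k ih =>
    intro f b σ hf hb hσ hdvd
    have hprod : (∏ i, σ i) = σ 0 * ∏ i : Fin k, σ i.succ := Fin.prod_univ_succ σ
    have hne : f.comp (X ^ σ 0) ≠ 0 := by
      rw [Ne, comp_eq_zero_iff]
      push_neg
      refine ⟨hf.ne_zero, fun _ => ?_⟩
      intro hX
      have h2 := hσ 0
      have := congrArg natDegree hX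
      rw [natDegree_X_pow, natDegree_C] at this
      omega
    have hdvd2 : b ∣ (f.comp (X ^ σ 0)).comp (X ^ ∏ i : Fin k, σ i.succ) := by
      rw [comp_assoc, X_pow_comp, ← pow_mul, mul_comm, ← hprod]
      exact hdvd
    obtain ⟨g, hgirr, hgdvd, hbg⟩ := key_step _ b _ hne hb.prime hdvd2
    obtain ⟨G, hG0, hGlast, hGirr, hGchain⟩ := ih g b (fun i => σ i.succ) hgirr hb
      (fun i => hσ i.succ) hbg
    refine ⟨Fin.cons f G, Fin.cons_zero _ _, ?_, ?_, ?_⟩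
    · rw [← Fin.succ_last, Fin.cons_succ]
      exact hGlast
    · intro i
      induction i using Fin.cases with
      | zero => simpa using hf
      | succ j => simpa using hGirr j
    · intro i
      induction i using Fin.cases with
      | zero =>
        simpa [Fin.succ_zero_eq_one' (n := k+1), hG0] using hgdvd
      | succ j =>
        rw [← Fin.succ_castSucc, Fin.cons_succ, Fin.cons_succ]
        exact hGchain j

theorem splitting_sequence_exists (f b : Polynomial ℤ) (hf : Irreducible f)
    (hfdeg : 0 < f.natDegree) (hb : Irreducible b) (hnassoc : ¬ Associated b f)
    (r : ℕ) (hr : 2 ≤ r) (hdvd : b ∣ f.comp (X ^ r))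
    (k : ℕ) (σ : Fin k → ℕ) (hσ : ∀ i, 2 ≤ σ i) (hprod : ∏ i, σ i = r) :
    ∃ F : Fin (k + 1) → Polynomial ℤ,
      F 0 = f ∧ F (Fin.last k) = b ∧ (∀ i, Irreducible (F i)) ∧
      ∀ i : Fin k, F i.succ ∣ (F i.castSucc).comp (X ^ σ i) := by
  classical
  subst hprod
  obtain ⟨F, hF0, hFlast, hFirr, hFchain⟩ := aux_chain k f b σ hf hb hσ hdvd
  match k with
  | 0 =>
    exfalso
    simp at hr
  | k + 1 =>
    refine ⟨Function.update F (Fin.last (k+1)) b, ?_, ?_, ?_, ?_⟩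
    · rw [Function.update_of_ne (by simp [Fin.ext_iff]) _ _]; exact hF0
    · simp
    · intro i
      rcases eq_or_ne i (Fin.last (k+1)) with h | h
      · subst h; simpa using hb
      · rw [Function.update_of_ne h]; exact hFirr i
    · intro i
      have hcast : i.castSucc ≠ Fin.last (k+1) := (Fin.castSucc_lt_last i).ne
      rw [Function.update_of_ne hcast]
      rcases eq_or_ne i.succ (Fin.last (k+1)) with h | h
      · rw [h, Function.update_self]
        exact dvd_trans hFlast.symm.dvd (by rw [← h]; exact hFchain i)
      · rw [Function.update_of_ne h]; exact hFchain i
end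

section
/- Let q ∈ (0,1) ∩ ℚ with q not of the form 1/n for an integer n > 1. Then the Puiseux monoid M_q = ⟨q^n : n ∈ ℕ₀⟩ is atomic, and its set of atoms is exactly {q^n : n ∈ ℕ₀}. -/
/-- An atom of an additive Puiseux monoid: a nonzero element admitting no
decomposition into two nonzero elements. -/
def IsMonoidAtom {M : AddSubmonoid ℚ} (a : M) : Prop :=
  a ≠ 0 ∧ ∀ b c : M, a = b + c → b = 0 ∨ c = 0

section Aux

variable {q : ℚ}

lemma Mq.num_ge_two (h0 : 0 < q) (h1 : q < 1)
    (hnot : ¬ ∃ n : ℤ, 1 < n ∧ q = 1 / (n : ℚ)) : 2 ≤ q.num := by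
  have hpos : 0 < q.num := Rat.num_pos.mpr h0
  by_contra h
  have hq1 : q.num = 1 := by omega
  have hden : 1 < q.den := by
    rcases Nat.lt_or_ge 1 q.den with h' | h'
    · exact h'
    · exfalso
      have hd1 : q.den = 1 := le_antisymm h' q.pos
      have hq : q = (q.num : ℚ) := by
        conv_lhs => rw [← Rat.num_div_den q]
        rw [hd1]; simp
      rw [hq, hq1] at h1
      norm_num at h1
  refine hnot ⟨(q.den : ℤ), by exact_mod_cast hden, ?_⟩
  have hd : ((q.den : ℤ) : ℚ) ≠ 0 := by
    have := q.pos; positivity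
  rw [eq_div_iff hd]
  push_cast
  rw [Rat.mul_den_eq_num, hq1]
  norm_num

lemma Mq.pow_mem (n : ℕ) : q ^ n ∈ Mq q :=
  AddSubmonoid.subset_closure ⟨n, rfl⟩

lemma Mq.lift_multiset (l : Multiset ℚ) :
    (∀ y ∈ l, y ∈ Set.range fun n : ℕ => q ^ n) →
    ∃ m : Multiset ℕ, Multiset.map (fun n => q ^ n) m = l := by
  induction l using Multiset.induction with
  | empty => exact fun _ => ⟨0, rfl⟩
  | cons y l ih =>
    intro hl
    obtain ⟨n, hn⟩ := hl y (Multiset.mem_cons_self y l)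
    obtain ⟨m, hm⟩ := ih fun z hz => hl z (Multiset.mem_cons_of_mem hz)
    exact ⟨n ::ₘ m, by simp only [Multiset.map_cons, hm]; exact congrArg (· ::ₘ l) hn⟩

lemma Mq.exists_exponents {x : ℚ} (hx : x ∈ Mq q) :
    ∃ m : Multiset ℕ, (m.map fun n => q ^ n).sum = x := by
  obtain ⟨l, hl, hsum⟩ := AddSubmonoid.exists_multiset_of_mem_closure hx
  obtain ⟨m, hm⟩ := Mq.lift_multiset l hl
  exact ⟨m, by rw [hm, hsum]⟩

lemma Mq.sum_mem (m : Multiset ℕ) : (m.map fun n => q ^ n).sum ∈ Mq q :=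
  AddSubmonoid.multiset_sum_mem _ _ fun x hx => by
    obtain ⟨n, _, rfl⟩ := Multiset.mem_map.mp hx
    exact Mq.pow_mem n

lemma Mq.sum_pow_mul (N : ℕ) (m : Multiset ℕ) (hm : ∀ n ∈ m, 1 ≤ n ∧ n ≤ N) :
    ∃ c : ℤ, (m.map fun n => q ^ n).sum * (q.den : ℚ) ^ N = (q.num : ℚ) * c := by
  induction m using Multiset.induction with
  | empty => exact ⟨0, by simp⟩
  | cons n m ih =>
    obtain ⟨c, hc⟩ := ih fun k hk => hm k (Multiset.mem_cons_of_mem hk)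
    obtain ⟨hn1, hnN⟩ := hm n (Multiset.mem_cons_self n m)
    refine ⟨q.num ^ (n - 1) * q.den ^ (N - n) + c, ?_⟩
    have key : (q : ℚ) ^ n * (q.den : ℚ) ^ N
        = (q.num : ℚ) * ((q.num : ℚ) ^ (n - 1) * (q.den : ℚ) ^ (N - n)) := by
      have hNn : N = n + (N - n) := by omega
      have hn' : n = 1 + (n - 1) := by omega
      calc (q : ℚ) ^ n * (q.den : ℚ) ^ N
          = (q * (q.den : ℚ)) ^ n * (q.den : ℚ) ^ (N - n) := by
            rw [mul_pow]; conv_lhs => rw [hNn]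
            rw [pow_add]; ring
        _ = (q.num : ℚ) ^ n * (q.den : ℚ) ^ (N - n) := by rw [Rat.mul_den_eq_num]
        _ = (q.num : ℚ) * ((q.num : ℚ) ^ (n - 1) * (q.den : ℚ) ^ (N - n)) := by
            have hpow : (q.num : ℚ) ^ n = (q.num : ℚ) * (q.num : ℚ) ^ (n - 1) := by
              conv_lhs => rw [hn']
              rw [pow_add, pow_one]
            rw [hpow]; ring
    push_cast
    rw [Multiset.map_cons, Multiset.sum_cons, add_mul, key, hc]
    ring

lemma Mq.sum_nonneg' (h0 : 0 < q) (m : Multiset ℕ) :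
    0 ≤ (m.map fun n => q ^ n).sum :=
  Multiset.sum_nonneg (by
    intro x hx
    obtain ⟨j, _, rfl⟩ := Multiset.mem_map.mp hx
    positivity)

/-- The key lemma: the only multiset of exponents whose powers sum to `q ^ k`
is `{k}`. -/
lemma Mq.key (h0 : 0 < q) (h1 : q < 1)
    (hnot : ¬ ∃ n : ℤ, 1 < n ∧ q = 1 / (n : ℚ)) :
    ∀ k : ℕ, ∀ m : Multiset ℕ, (m.map fun n => q ^ n).sum = q ^ k → m = {k} := by
  have ha := Mq.num_ge_two h0 h1 hnot
  intro k
  induction k with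
  | zero =>
    intro m hm
    by_cases h00 : 0 ∈ m
    · obtain ⟨m', rfl⟩ := Multiset.exists_cons_of_mem h00
      simp only [Multiset.map_cons, Multiset.sum_cons, pow_zero] at hm
      have hsum0 : (m'.map fun n => q ^ n).sum = 0 := by linarith
      have hm'0 : m' = 0 := by
        by_contra hne
        obtain ⟨n, hn⟩ := Multiset.exists_mem_of_ne_zero hne
        have hle : q ^ n ≤ (m'.map fun n => q ^ n).sum := by
          refine Multiset.single_le_sum ?_ _ (Multiset.mem_map_of_mem _ hn)
          intro x hx
          obtain ⟨j, _, rfl⟩ := Multiset.mem_map.mp hx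
          positivity
        have : (0:ℚ) < q ^ n := by positivity
        linarith
      rw [hm'0]
      rfl
    · exfalso
      set N := (m.map id).sum + 1 with hN
      have hb : ∀ n ∈ m, 1 ≤ n ∧ n ≤ N := by
        intro n hn
        constructor
        · rcases Nat.eq_zero_or_pos n with rfl | h
          · exact absurd hn h00
          · exact h
        · have : n ≤ (m.map id).sum :=
            Multiset.le_sum_of_mem (Multiset.mem_map_of_mem id hn)
          omega
      obtain ⟨c, hc⟩ := Mq.sum_pow_mul N m hb
      rw [hm, pow_zero, one_mul] at hc
      have hz : ((q.den : ℤ)) ^ N = q.num * c := by exact_mod_cast hc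
      have hdvd : q.num ∣ (q.den : ℤ) ^ N := ⟨c, hz⟩
      have hdvd' : q.num.natAbs ∣ q.den ^ N := by
        have h2 := Int.natAbs_dvd_natAbs.mpr hdvd
        rwa [Int.natAbs_pow, Int.natAbs_natCast] at h2
      have hcop : (q.num.natAbs).Coprime (q.den ^ N) := q.reduced.pow_right N
      have := hcop.eq_one_of_dvd hdvd'
      omega
  | succ k ih =>
    intro m hm
    have h00 : 0 ∉ m := by
      intro h00
      obtain ⟨m', rfl⟩ := Multiset.exists_cons_of_mem h00
      simp only [Multiset.map_cons, Multiset.sum_cons, pow_zero] at hm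
      have hnn := Mq.sum_nonneg' h0 m'
      have hlt : q ^ (k + 1) < 1 := pow_lt_one₀ h0.le h1 (Nat.succ_ne_zero k)
      linarith
    set m' := m.map (· - 1) with hm'
    have hrw : m'.map (· + 1) = m := by
      rw [hm', Multiset.map_map]
      conv_rhs => rw [← Multiset.map_id m]
      apply Multiset.map_congr rfl
      intro n hn
      have : n ≠ 0 := fun h => h00 (h ▸ hn)
      simp only [Function.comp_apply, id]
      omega
    have hq0 : (q : ℚ) ≠ 0 := h0.ne'
    have hmap : m.map (fun n => q ^ n) = m'.map (fun n => q ^ n * q) := by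
      conv_lhs => rw [← hrw]
      rw [Multiset.map_map]
      apply Multiset.map_congr rfl
      intro n _
      simp [Function.comp, pow_succ]
    rw [hmap, Multiset.sum_map_mul_right, pow_succ] at hm
    have hsum' : (m'.map fun n => q ^ n).sum = q ^ k :=
      mul_right_cancel₀ hq0 hm
    have := ih m' hsum'
    rw [← hrw, this]
    rfl

lemma Mq.pow_atom (h0 : 0 < q) (h1 : q < 1)
    (hnot : ¬ ∃ n : ℤ, 1 < n ∧ q = 1 / (n : ℚ)) (k : ℕ) :
    IsMonoidAtom (⟨q ^ k, Mq.pow_mem k⟩ : Mq q) := by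
  constructor
  · intro h
    have : (q : ℚ) ^ k = 0 := congrArg Subtype.val h
    exact pow_ne_zero k h0.ne' this
  · intro b c hbc
    obtain ⟨mb, hb⟩ := Mq.exists_exponents b.2
    obtain ⟨mc, hc⟩ := Mq.exists_exponents c.2
    have hval : (q : ℚ) ^ k = (b : ℚ) + (c : ℚ) := congrArg Subtype.val hbc
    have hsum : ((mb + mc).map fun n => q ^ n).sum = q ^ k := by
      rw [Multiset.map_add, Multiset.sum_add, hb, hc, hval]
    have hk := Mq.key h0 h1 hnot k (mb + mc) hsum
    have hcard : Multiset.card mb + Multiset.card mc = 1 := by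
      have := congrArg Multiset.card hk
      simpa using this
    rcases Nat.lt_or_ge 0 (Multiset.card mb) with hmb | hmb
    · right
      have : Multiset.card mc = 0 := by omega
      have hmc0 : mc = 0 := Multiset.card_eq_zero.mp this
      apply Subtype.ext
      rw [← hc, hmc0]
      rfl
    · left
      have hmb0 : mb = 0 := Multiset.card_eq_zero.mp (by omega)
      apply Subtype.ext
      rw [← hb, hmb0]
      rfl

end Aux

theorem Mq_atomic_and_atoms (q : ℚ) (h0 : 0 < q) (h1 : q < 1)
    (hnot : ¬ ∃ n : ℤ, 1 < n ∧ q = 1 / (n : ℚ)) :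
    (∀ x : Mq q, ∃ s : Multiset (Mq q), (∀ a ∈ s, IsMonoidAtom a) ∧ s.sum = x) ∧
    {a : Mq q | IsMonoidAtom a} = {a : Mq q | ∃ n : ℕ, (a : ℚ) = q ^ n} := by
  constructor
  · intro x
    obtain ⟨m, hm⟩ := Mq.exists_exponents x.2
    refine ⟨m.map fun n => (⟨q ^ n, Mq.pow_mem n⟩ : Mq q), ?_, ?_⟩
    · intro a ha
      obtain ⟨n, _, rfl⟩ := Multiset.mem_map.mp ha
      exact Mq.pow_atom h0 h1 hnot n
    · apply Subtype.ext
      have hcoe := AddMonoidHom.map_multiset_sum (Mq q).subtype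
        (m.map fun n => (⟨q ^ n, Mq.pow_mem n⟩ : Mq q))
      simp only [AddSubmonoid.coe_subtype, Multiset.map_map, Function.comp] at hcoe
      rw [← hm]
      exact hcoe
  · ext a
    simp only [Set.mem_setOf_eq]
    constructor
    · intro ha
      obtain ⟨m, hm⟩ := Mq.exists_exponents a.2
      have hne : m ≠ 0 := by
        intro h
        rw [h] at hm
        exact ha.1 (Subtype.ext (by rw [← hm]; rfl))
      obtain ⟨n, hn⟩ := Multiset.exists_mem_of_ne_zero hne
      obtain ⟨m', rfl⟩ := Multiset.exists_cons_of_mem hn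
      set b : Mq q := ⟨q ^ n, Mq.pow_mem n⟩
      set c : Mq q := ⟨(m'.map fun n => q ^ n).sum, Mq.sum_mem m'⟩
      have habc : a = b + c := by
        apply Subtype.ext
        rw [← hm, Multiset.map_cons, Multiset.sum_cons]
        rfl
      rcases ha.2 b c habc with hb0 | hc0
      · exfalso
        have : (q : ℚ) ^ n = 0 := congrArg Subtype.val hb0
        exact pow_ne_zero n h0.ne' this
      · refine ⟨n, ?_⟩
        rw [habc, hc0, add_zero]
    · rintro ⟨n, hn⟩
      have : a = ⟨q ^ n, Mq.pow_mem n⟩ := Subtype.ext hn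
      rw [this]
      exact Mq.pow_atom h0 h1 hnot n
end

section
/- Let q ∈ (0,1) ∩ ℚ with q not of the form 1/n for an integer n > 1. Then the Puiseux monoid M_q = ⟨q^n : n ∈ ℕ₀⟩ does not satisfy the ascending chain condition on principal ideals: there exists a strictly ascending non-stabilizing chain of principal ideals (x + M_q) in M_q. -/
theorem setOf_add_ssubset_setOf_add {M : Type*} [AddMonoid M] {x y : M}
    (hdvd : ∃ d, x = y + d) (hndvd : ¬ ∃ d, y = x + d) :
    {z | ∃ d, z = x + d} ⊂ {z | ∃ d, z = y + d} := by
  obtain ⟨e, rfl⟩ := hdvd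
  refine ⟨fun z ⟨d, hz⟩ => ⟨e + d, by rw [hz, add_assoc]⟩, fun hsub => hndvd ?_⟩
  exact hsub ⟨0, (add_zero y).symm⟩

theorem Rat.exists_nat_mul_eq_of_pos_of_lt_one {q : ℚ} (h0 : 0 < q) (h1 : q < 1) :
    ∃ a b : ℕ, 0 < a ∧ a < b ∧ q * b = a := by
  have hnum : 0 ≤ q.num := (Rat.num_pos.mpr h0).le
  have hq : q * q.den = q.num.natAbs := by
    rw [Rat.mul_den_eq_num, Nat.cast_natAbs, abs_of_nonneg hnum]
  refine ⟨q.num.natAbs, q.den, Int.natAbs_pos.mpr (Rat.num_pos.mpr h0).ne', ?_, hq⟩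
  have hden : (0 : ℚ) < q.den := by exact_mod_cast q.den_pos
  exact_mod_cast (hq ▸ mul_lt_of_lt_one_left hden h1 : ((q.num.natAbs : ℕ) : ℚ) < q.den)

def Mq.pow (q : ℚ) (n : ℕ) : Mq q :=
  ⟨q ^ n, AddSubmonoid.subset_closure ⟨n, rfl⟩⟩

section

variable {q : ℚ}

@[simp]
theorem Mq.coe_pow (n : ℕ) : (Mq.pow q n : ℚ) = q ^ n :=
  rfl

theorem Mq.coe_nonneg (hq : 0 ≤ q) (x : Mq q) : 0 ≤ (x : ℚ) := by
  obtain ⟨x, hx⟩ := x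
  induction hx using AddSubmonoid.closure_induction with
  | mem y hy => obtain ⟨n, rfl⟩ := hy; positivity
  | zero => exact le_rfl
  | add y z _ _ hy hz => exact add_nonneg hy hz

theorem Mq.coe_le_of_eq_add (hq : 0 ≤ q) {x y d : Mq q} (h : y = x + d) : (x : ℚ) ≤ y := by
  rw [h, AddSubmonoid.coe_add]
  exact le_add_of_nonneg_right (coe_nonneg hq d)

theorem Mq.nsmul_pow_succ {a b : ℕ} (hq : q * b = a) (n : ℕ) :
    b • pow q (n + 1) = a • pow q n := by
  apply Subtype.ext
  simp only [AddSubmonoidClass.coe_nsmul, Mq.coe_pow, nsmul_eq_mul, ← hq]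
  ring

theorem Mq.nsmul_pow_eq_nsmul_pow_succ_add {a b : ℕ} (hab : a ≤ b) (hq : q * b = a) (n : ℕ) :
    a • pow q n = a • pow q (n + 1) + (b - a) • pow q (n + 1) := by
  rw [← add_nsmul, Nat.add_sub_cancel' hab, nsmul_pow_succ hq]

theorem Mq.not_exists_nsmul_pow_succ_eq_add (h0 : 0 < q) (h1 : q < 1) {a : ℕ} (ha : 0 < a)
    (n : ℕ) : ¬ ∃ d, a • pow q (n + 1) = a • pow q n + d := by
  rintro ⟨d, hd⟩
  have hle := coe_le_of_eq_add h0.le hd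
  simp only [AddSubmonoidClass.coe_nsmul, Mq.coe_pow, nsmul_eq_mul] at hle
  have hlt : q ^ (n + 1) < q ^ n := pow_lt_pow_right_of_lt_one₀ h0 h1 n.lt_succ_self
  have ha' : (0 : ℚ) < a := by exact_mod_cast ha
  exact (mul_lt_mul_of_pos_left hlt ha').not_ge hle

end

theorem Mq_not_ACCP_general (q : ℚ) (h0 : 0 < q) (h1 : q < 1) :
    ∃ x : ℕ → Mq q, ∀ n : ℕ,
      {y : Mq q | ∃ d : Mq q, y = x n + d} ⊂
        {y : Mq q | ∃ d : Mq q, y = x (n + 1) + d} := by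
  obtain ⟨a, b, ha, hab, hq⟩ := Rat.exists_nat_mul_eq_of_pos_of_lt_one h0 h1
  refine ⟨fun n => a • Mq.pow q n, fun n => setOf_add_ssubset_setOf_add ?_ ?_⟩
  · exact ⟨_, Mq.nsmul_pow_eq_nsmul_pow_succ_add hab.le hq n⟩
  · exact Mq.not_exists_nsmul_pow_succ_eq_add h0 h1 ha n

theorem Mq_not_ACCP (q : ℚ) (h0 : 0 < q) (h1 : q < 1)
    (hnot : ¬ ∃ n : ℤ, 1 < n ∧ q = 1 / (n : ℚ)) :
    ∃ x : ℕ → Mq q, ∀ n : ℕ,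
      {y : Mq q | ∃ d : Mq q, y = x n + d} ⊂
        {y : Mq q | ∃ d : Mq q, y = x (n + 1) + d} :=
  Mq_not_ACCP_general q h0 h1
end

section
/- Let q > 1 be a rational number. Then the Puiseux monoid M_q = ⟨q^n : n ∈ ℕ₀⟩ satisfies the ascending chain condition on principal ideals. -/
theorem AddSubmonoid.eq_zero_or_le_of_mem_closure {M : Type*} [AddCommMonoid M] [PartialOrder M]
    [IsOrderedAddMonoid M] {s : Set M} {c : M} (hc : 0 ≤ c) (hs : ∀ x ∈ s, c ≤ x) {a : M}
    (ha : a ∈ closure s) : a = 0 ∨ c ≤ a := by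
  induction ha using closure_induction with
  | mem x hx => exact .inr (hs x hx)
  | zero => exact .inl rfl
  | add x y _ _ hx hy =>
    rcases hx with rfl | hx
    · simpa using hy
    · refine .inr (le_add_of_le_of_nonneg hx ?_)
      rcases hy with rfl | hy
      exacts [le_rfl, hc.trans hy]

theorem Mq_eq_zero_or_one_le {q : ℚ} (hq : 1 ≤ q) {a : ℚ} (ha : a ∈ Mq q) : a = 0 ∨ 1 ≤ a :=
  AddSubmonoid.eq_zero_or_le_of_mem_closure zero_le_one
    (by rintro _ ⟨n, rfl⟩; exact one_le_pow₀ hq) ha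

theorem Mq_nonneg {q : ℚ} (hq : 1 ≤ q) {a : ℚ} (ha : a ∈ Mq q) : 0 ≤ a := by
  rcases Mq_eq_zero_or_one_le hq ha with rfl | h
  exacts [le_rfl, zero_le_one.trans h]

section Floor

variable {R : Type*} [Semiring R] [LinearOrder R] [IsStrictOrderedRing R] [FloorSemiring R]

theorem exists_forall_ge_eq_of_eq_or_add_one_le {v : ℕ → R} (hv : ∀ n, 0 ≤ v n)
    (hstep : ∀ n, v (n + 1) = v n ∨ v (n + 1) + 1 ≤ v n) : ∃ N, ∀ n ≥ N, v n = v N := by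
  set N := Function.argmin fun n => ⌊v n⌋₊
  have hmin : ∀ n, ⌊v N⌋₊ ≤ ⌊v n⌋₊ := fun n => Function.argmin_le (fun n => ⌊v n⌋₊) n
  refine ⟨N, Nat.le_induction rfl fun n _ ih => ?_⟩
  rcases hstep n with h | h
  · rw [h, ih]
  · have hdrop : ⌊v (n + 1)⌋₊ + 1 ≤ ⌊v n⌋₊ := by
      rw [← Nat.floor_add_one (hv _)]
      exact Nat.floor_le_floor h
    have := hmin (n + 1)
    rw [ih] at hdrop
    omega

end Floor

theorem Mq_ACCP_of_one_lt (q : ℚ) (hq : 1 < q) :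
    ∀ x : ℕ → Mq q, (∀ n : ℕ, ∃ d : Mq q, x n = x (n + 1) + d) →
      ∃ N : ℕ, ∀ n : ℕ, N ≤ n →
        {y : Mq q | ∃ d : Mq q, y = x n + d} =
          {y : Mq q | ∃ d : Mq q, y = x N + d} := by
  intro x hx
  have hstep : ∀ n, (x (n + 1) : ℚ) = x n ∨ (x (n + 1) : ℚ) + 1 ≤ x n := by
    intro n
    obtain ⟨d, hd⟩ := hx n
    rw [hd, AddSubmonoid.coe_add]
    rcases Mq_eq_zero_or_one_le hq.le d.2 with h | h
    · exact .inl (by rw [h, add_zero])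
    · exact .inr (by gcongr)
  obtain ⟨N, hN⟩ :=
    exists_forall_ge_eq_of_eq_or_add_one_le (fun n => Mq_nonneg hq.le (x n).2) hstep
  exact ⟨N, fun n hn => by rw [Subtype.ext (hN n hn)]⟩
end
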